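/- arXiv:2306.10171 — 3 statements merged into one kernel-verified Lean document; each statement's English description precedes it below -/
import Mathlib

section
/- Let A ∈ ℝ^{S×S} with partitioned SVD A = [U₁ U₂] diag(Σ₁, Σ₂) [V₁ V₂]ᵀ where Σ₁ is d×d, let A_d = U₁Σ₁V₁ᵀ, let Ω ∈ ℝ^{S×ℓ} with ℓ ≥ d, and set Y = AΩ, Ω₁ = V₁ᵀΩ, Ω₂ = V₂ᵀΩ. If Ω₁ has full row rank, then ‖(I − P_Y) A_d‖²_op ≤ ‖Σ₂ Ω₂ Ω₁^† ‖²_op, where P_Y is the orthogonal projection onto the column span of Y and Ω₁^† is the Moore–Penrose pseudoinverse. -/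
/-!
With `X = Ω₁† V₁ᵀ`, the projection `I - P_Y` kills `Y X`, so `(I - P_Y) A_d = (I - P_Y)(A_d - Y X)`
and, `I - P_Y` being a contraction, `‖(I - P_Y) A_d‖ ≤ ‖A_d - Y X‖`. In the coordinates `Vᵀ x`,
`A_d - Y X = U (Σ_d Vᵀ - Σ Vᵀ Ω Ω₁† V₁ᵀ)`: since `V₁ᵀ Ω Ω₁† = Ω₁ Ω₁† = I`, the top block cancels
and the bottom block is `-Σ₂ Ω₂ Ω₁† V₁ᵀ`. As `U` is an isometry and `‖V₁ᵀ‖ ≤ 1`, the bound follows.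
-/

open Matrix

/-- Spectral (ℓ₂ operator) norm of a real matrix. -/
noncomputable def opNorm {m n : ℕ} (M : Matrix (Fin m) (Fin n) ℝ) : ℝ :=
  ‖LinearMap.toContinuousLinearMap (Matrix.toEuclideanLin M)‖

/-- Column span of a matrix. -/
def colSpan {m n : ℕ} (M : Matrix (Fin m) (Fin n) ℝ) : Submodule ℝ (Fin m → ℝ) :=
  LinearMap.range M.mulVecLin

/-- `P` is the orthogonal projection onto the column span of `M`. -/
def IsOrthProjOnto {m k : ℕ} (P : Matrix (Fin m) (Fin m) ℝ)
    (M : Matrix (Fin m) (Fin k) ℝ) : Prop :=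
  P.IsSymm ∧ P * P = P ∧ colSpan P = colSpan M

section EuclideanNorm

variable {m n : ℕ}

lemma sq_norm_toLp (v : Fin n → ℝ) : ‖WithLp.toLp 2 v‖ ^ 2 = v ⬝ᵥ v := by
  rw [← real_inner_self_eq_norm_sq, EuclideanSpace.inner_toLp_toLp, star_trivial]

lemma dotProduct_self_nonneg (v : Fin n → ℝ) : 0 ≤ v ⬝ᵥ v := by
  rw [← sq_norm_toLp]; positivity

lemma opNorm_nonneg (M : Matrix (Fin m) (Fin n) ℝ) : 0 ≤ opNorm M := norm_nonneg _

lemma dotProduct_self_mulVec_le_opNorm_sq (M : Matrix (Fin m) (Fin n) ℝ) (v : Fin n → ℝ) :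
    (M *ᵥ v) ⬝ᵥ (M *ᵥ v) ≤ opNorm M ^ 2 * (v ⬝ᵥ v) := by
  rw [← sq_norm_toLp, ← sq_norm_toLp, ← mul_pow]
  gcongr
  exact (LinearMap.toContinuousLinearMap (toEuclideanLin M)).le_opNorm (WithLp.toLp 2 v)

lemma opNorm_le_of_dotProduct_self_le (M : Matrix (Fin m) (Fin n) ℝ) {C : ℝ} (hC : 0 ≤ C)
    (h : ∀ v, (M *ᵥ v) ⬝ᵥ (M *ᵥ v) ≤ C ^ 2 * (v ⬝ᵥ v)) : opNorm M ≤ C := by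
  refine ContinuousLinearMap.opNorm_le_bound _ hC fun x => ?_
  rw [← pow_le_pow_iff_left₀ (norm_nonneg _) (by positivity) two_ne_zero, mul_pow]
  have := h x.ofLp
  rwa [← sq_norm_toLp, ← sq_norm_toLp] at this

lemma dotProduct_self_mulVec_of_transpose_mul_self_eq_one {M : Matrix (Fin m) (Fin n) ℝ}
    (hM : Mᵀ * M = 1) (v : Fin n → ℝ) : (M *ᵥ v) ⬝ᵥ (M *ᵥ v) = v ⬝ᵥ v := by
  rw [dotProduct_mulVec, ← vecMul_transpose, vecMul_vecMul, hM, vecMul_one]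

end EuclideanNorm

namespace IsOrthProjOnto

variable {m k n : ℕ} {P : Matrix (Fin m) (Fin m) ℝ} {Y : Matrix (Fin m) (Fin k) ℝ}

lemma mulVec_mulVec_eq (hP : IsOrthProjOnto P Y) (v : Fin k → ℝ) : P *ᵥ (Y *ᵥ v) = Y *ᵥ v := by
  obtain ⟨u, hu⟩ : Y *ᵥ v ∈ colSpan P := hP.2.2 ▸ ⟨v, rfl⟩
  rw [← hu, mulVecLin_apply, mulVec_mulVec, hP.2.1]

lemma dotProduct_self_one_sub_mulVec_le (hP : IsOrthProjOnto P Y) (w : Fin m → ℝ) :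
    ((1 - P) *ᵥ w) ⬝ᵥ ((1 - P) *ᵥ w) ≤ w ⬝ᵥ w := by
  have hPP : (P *ᵥ w) ⬝ᵥ (P *ᵥ w) = w ⬝ᵥ (P *ᵥ w) := by
    rw [dotProduct_mulVec, ← mulVec_transpose, mulVec_mulVec, hP.1.eq, hP.2.1, dotProduct_comm]
  rw [sub_mulVec, one_mulVec, sub_dotProduct, dotProduct_sub, dotProduct_sub]
  linarith [dotProduct_comm (P *ᵥ w) w, dotProduct_self_nonneg (P *ᵥ w)]

/-- `(1 - P) Y = 0` gives `(1 - P) B = (1 - P) (B - Y X)`, and `1 - P` is a contraction. -/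
lemma opNorm_one_sub_mul_le (hP : IsOrthProjOnto P Y) (B : Matrix (Fin m) (Fin n) ℝ)
    (X : Matrix (Fin k) (Fin n) ℝ) : opNorm ((1 - P) * B) ≤ opNorm (B - Y * X) := by
  refine opNorm_le_of_dotProduct_self_le _ (opNorm_nonneg _) fun v => ?_
  have hB : ((1 - P) * B) *ᵥ v = (1 - P) *ᵥ ((B - Y * X) *ᵥ v) := by
    rw [← mulVec_mulVec, sub_mulVec B, mulVec_sub (1 - P), ← mulVec_mulVec v Y,
      sub_mulVec 1 P (Y *ᵥ _), one_mulVec, hP.mulVec_mulVec_eq, sub_self, sub_zero]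
  rw [hB]
  exact (hP.dotProduct_self_one_sub_mulVec_le _).trans (dotProduct_self_mulVec_le_opNorm_sq _ v)

end IsOrthProjOnto

def Fin.natAddOfLE {d S : ℕ} (h : d ≤ S) (k : Fin (S - d)) : Fin S := ⟨d + k, by omega⟩

lemma Fin.sum_univ_eq_sum_castLE_add_sum_natAddOfLE {M : Type*} [AddCommMonoid M] {d S : ℕ}
    (h : d ≤ S) (g : Fin S → M) :
    ∑ i, g i = ∑ j, g (Fin.castLE h j) + ∑ k, g (Fin.natAddOfLE h k) := by
  rw [← Equiv.sum_comp (finSumFinEquiv.trans (finCongr (Nat.add_sub_of_le h))) g,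
    Fintype.sum_sum_type]
  rfl

lemma dotProduct_self_eq_castLE_add_natAddOfLE {d S : ℕ} (h : d ≤ S) (w : Fin S → ℝ) :
    w ⬝ᵥ w = (w ∘ Fin.castLE h) ⬝ᵥ (w ∘ Fin.castLE h) +
      (w ∘ Fin.natAddOfLE h) ⬝ᵥ (w ∘ Fin.natAddOfLE h) :=
  Fin.sum_univ_eq_sum_castLE_add_sum_natAddOfLE h _

lemma transpose_submatrix_mulVec {m n k : ℕ} (V : Matrix (Fin m) (Fin n) ℝ) (f : Fin k → Fin n)
    (w : Fin m → ℝ) : (V.submatrix id f)ᵀ *ᵥ w = (Vᵀ *ᵥ w) ∘ f := rfl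

def truncateAt {S : ℕ} (d : ℕ) (σ : Fin S → ℝ) (i : Fin S) : ℝ := if (i : ℕ) < d then σ i else 0

lemma truncateAt_castLE {S d : ℕ} (h : d ≤ S) (σ : Fin S → ℝ) (j : Fin d) :
    truncateAt d σ (Fin.castLE h j) = σ (Fin.castLE h j) :=
  if_pos j.isLt

lemma truncateAt_natAddOfLE {S d : ℕ} (h : d ≤ S) (σ : Fin S → ℝ) (k : Fin (S - d)) :
    truncateAt d σ (Fin.natAddOfLE h k) = 0 :=
  if_neg (Nat.not_lt.mpr (Nat.le_add_right d k))

lemma of_ite_and_eq_diagonal_truncateAt {S : ℕ} (d : ℕ) (σ : Fin S → ℝ) :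
    (Matrix.of fun i j : Fin S => if i = j ∧ (i : ℕ) < d then σ i else 0) =
      diagonal (truncateAt d σ) := by
  ext i j
  by_cases h : i = j <;> simp [h, truncateAt]

lemma opNorm_truncatedSVD_sub_le {S d ℓ : ℕ} (hdS : d ≤ S) {U V : Matrix (Fin S) (Fin S) ℝ}
    (hU : Uᵀ * U = 1) (hV : Vᵀ * V = 1) (σ : Fin S → ℝ) (Ω : Matrix (Fin S) (Fin ℓ) ℝ)
    (R : Matrix (Fin ℓ) (Fin d) ℝ) (hR : (V.submatrix id (Fin.castLE hdS))ᵀ * Ω * R = 1) :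
    opNorm (U * diagonal (truncateAt d σ) * Vᵀ -
        U * diagonal σ * Vᵀ * Ω * (R * (V.submatrix id (Fin.castLE hdS))ᵀ)) ≤
      opNorm (diagonal (σ ∘ Fin.natAddOfLE hdS) *
        ((V.submatrix id (Fin.natAddOfLE hdS))ᵀ * Ω) * R) := by
  set V₁ := V.submatrix id (Fin.castLE hdS)
  set F := diagonal (σ ∘ Fin.natAddOfLE hdS) * ((V.submatrix id (Fin.natAddOfLE hdS))ᵀ * Ω) * R
  refine opNorm_le_of_dotProduct_self_le _ (opNorm_nonneg _) fun x => ?_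
  set y := V₁ᵀ *ᵥ x
  set w := Ω *ᵥ (R *ᵥ y)
  set r := diagonal (truncateAt d σ) *ᵥ (Vᵀ *ᵥ x) - diagonal σ *ᵥ (Vᵀ *ᵥ w)
  have hres : (U * diagonal (truncateAt d σ) * Vᵀ -
      U * diagonal σ * Vᵀ * Ω * (R * V₁ᵀ)) *ᵥ x = U *ᵥ r := by
    simp only [sub_mulVec, ← mulVec_mulVec, mulVec_sub, r, w, y]
  have hw : V₁ᵀ *ᵥ w = y := by
    simp only [w, mulVec_mulVec, ← Matrix.mul_assoc, hR, one_mulVec]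
  have hlow : r ∘ Fin.castLE hdS = 0 := by
    funext j
    have hwj : (Vᵀ *ᵥ w) (Fin.castLE hdS j) = y j := congrFun hw j
    simp only [Function.comp_apply, r, Pi.sub_apply, mulVec_diagonal, truncateAt_castLE, hwj,
      Pi.zero_apply]
    exact sub_self _
  have hhigh : r ∘ Fin.natAddOfLE hdS = -(F *ᵥ y) := by
    funext k
    simp only [Function.comp_apply, r, F, w, Pi.sub_apply, Pi.neg_apply, mulVec_diagonal,
      truncateAt_natAddOfLE, zero_mul, zero_sub, ← mulVec_mulVec]
    rfl
  have hy : y ⬝ᵥ y ≤ x ⬝ᵥ x := by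
    have hVt : Vᵀᵀ * Vᵀ = 1 := by rw [transpose_transpose, mul_eq_one_comm.mp hV]
    rw [← dotProduct_self_mulVec_of_transpose_mul_self_eq_one hVt x,
      dotProduct_self_eq_castLE_add_natAddOfLE hdS]
    exact le_add_of_nonneg_right (dotProduct_self_nonneg _)
  calc _ = r ⬝ᵥ r := by rw [hres, dotProduct_self_mulVec_of_transpose_mul_self_eq_one hU]
    _ = (F *ᵥ y) ⬝ᵥ (F *ᵥ y) := by
      rw [dotProduct_self_eq_castLE_add_natAddOfLE hdS, hlow, hhigh, zero_dotProduct, zero_add,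
        neg_dotProduct, dotProduct_neg, neg_neg]
    _ ≤ opNorm F ^ 2 * (y ⬝ᵥ y) := dotProduct_self_mulVec_le_opNorm_sq F y
    _ ≤ opNorm F ^ 2 * (x ⬝ᵥ x) := by gcongr

/-- Deterministic error bound (Halko–Martinsson–Tropp style): with `A = U Σ Vᵀ` an SVD
partitioned at rank `d`, `A_d` the rank-`d` truncation, `Y = AΩ`, `Ω₁ = V₁ᵀΩ`,
`Ω₂ = V₂ᵀΩ` and `Ω₁` of full row rank,
`‖(I - P_Y) A_d‖² ≤ ‖Sig₂ Ω₂ Ω₁†‖²` where `Ω₁† = Ω₁ᵀ(Ω₁Ω₁ᵀ)⁻¹`. -/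
theorem stmt6 {S d ℓ : ℕ} (hdS : d ≤ S)
    (U V : Matrix (Fin S) (Fin S) ℝ) (hU : Uᵀ * U = 1) (hV : Vᵀ * V = 1)
    (σ : Fin S → ℝ)
    (A : Matrix (Fin S) (Fin S) ℝ) (hA : A = U * Matrix.diagonal σ * Vᵀ)
    (Ad : Matrix (Fin S) (Fin S) ℝ)
    (hAd : Ad = U *
      (Matrix.of fun (i j : Fin S) => if i = j ∧ (i : ℕ) < d then σ i else 0) * Vᵀ)
    (Ω : Matrix (Fin S) (Fin ℓ) ℝ)
    (V₁ : Matrix (Fin S) (Fin d) ℝ)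
    (hV₁ : V₁ = Matrix.of fun i (j : Fin d) => V i ⟨(j : ℕ), by omega⟩)
    (V₂ : Matrix (Fin S) (Fin (S - d)) ℝ)
    (hV₂ : V₂ = Matrix.of fun i (j : Fin (S - d)) =>
      V i ⟨d + (j : ℕ), by have := j.isLt; omega⟩)
    (Sig₂ : Matrix (Fin (S - d)) (Fin (S - d)) ℝ)
    (hSig₂ : Sig₂ = Matrix.diagonal fun (j : Fin (S - d)) =>
      σ ⟨d + (j : ℕ), by have := j.isLt; omega⟩)
    (Ω₁ : Matrix (Fin d) (Fin ℓ) ℝ) (hΩ₁ : Ω₁ = V₁ᵀ * Ω)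
    (Ω₂ : Matrix (Fin (S - d)) (Fin ℓ) ℝ) (hΩ₂ : Ω₂ = V₂ᵀ * Ω)
    (hfullrank : IsUnit (Ω₁ * Ω₁ᵀ))
    (PY : Matrix (Fin S) (Fin S) ℝ) (hPY : IsOrthProjOnto PY (A * Ω)) :
    opNorm ((1 - PY) * Ad) ^ 2 ≤ opNorm (Sig₂ * Ω₂ * (Ω₁ᵀ * (Ω₁ * Ω₁ᵀ)⁻¹)) ^ 2 := by
  have hR : Ω₁ * (Ω₁ᵀ * (Ω₁ * Ω₁ᵀ)⁻¹) = 1 := by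
    rw [← Matrix.mul_assoc]
    exact mul_nonsing_inv _ ((isUnit_iff_isUnit_det _).mp hfullrank)
  have hbound : opNorm ((1 - PY) * Ad) ≤ opNorm (Sig₂ * Ω₂ * (Ω₁ᵀ * (Ω₁ * Ω₁ᵀ)⁻¹)) :=
    calc _ ≤ opNorm (Ad - A * Ω * (Ω₁ᵀ * (Ω₁ * Ω₁ᵀ)⁻¹ * V₁ᵀ)) := hPY.opNorm_one_sub_mul_le _ _
      _ ≤ _ := by
        subst hA hAd hV₁ hV₂ hSig₂ hΩ₁ hΩ₂
        rw [of_ite_and_eq_diagonal_truncateAt]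
        exact opNorm_truncatedSVD_sub_le hdS hU hV σ Ω _ hR
  exact pow_le_pow_left₀ (opNorm_nonneg _) hbound 2
end

section
/- Let L = I − γP^π be invertible, Ξ diagonal positive definite, G ∈ ℝ^{S×T}, and Φ ∈ ℝ^{S×d} full rank with Φᵀ Ξ L Φ invertible. Define W*_Φ = (Φᵀ Ξ L Φ)^{-1} Φᵀ Ξ G. If (L Φ W*_Φ − G)(W*_Φ)ᵀ = 0, then Span(L^{-1} G Gᵀ Ξ Φ) ⊆ Span(Φ), i.e., Φ spans an invariant subspace of L^{-1} G Gᵀ Ξ. -/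
open Matrix

lemma colSpan_mul_le {m n k : ℕ} (A : Matrix (Fin m) (Fin n) ℝ)
    (B : Matrix (Fin n) (Fin k) ℝ) : colSpan (A * B) ≤ colSpan A := by
  intro x hx
  obtain ⟨v, hv⟩ := hx
  exact ⟨B.mulVec v, by simpa [Matrix.mulVec_mulVec] using hv⟩

/-- Critical representations for TD: if the LSTD weights `W*` satisfy the criticality
condition `(LΦW* - G)(W*)ᵀ = 0` with `L = I - γPπ`, then `Φ` spans an invariant
subspace of `L⁻¹ G Gᵀ Ξ`. -/
theorem stmt10 {S d T : ℕ} (γ : ℝ) (hγ0 : 0 ≤ γ) (hγ1 : γ < 1)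
    (Pπ : Matrix (Fin S) (Fin S) ℝ)
    (ξ : Fin S → ℝ) (hξ : ∀ i, 0 < ξ i)
    (G : Matrix (Fin S) (Fin T) ℝ)
    (Φ : Matrix (Fin S) (Fin d) ℝ) (hrank : Φ.rank = d)
    (L : Matrix (Fin S) (Fin S) ℝ) (hLdef : L = 1 - γ • Pπ) (hL : IsUnit L)
    (hinv : IsUnit (Φᵀ * Matrix.diagonal ξ * L * Φ))
    (Wstar : Matrix (Fin d) (Fin T) ℝ)
    (hW : Wstar = (Φᵀ * Matrix.diagonal ξ * L * Φ)⁻¹ * Φᵀ * Matrix.diagonal ξ * G)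
    (hcrit : (L * Φ * Wstar - G) * Wstarᵀ = 0) :
    colSpan (L⁻¹ * G * Gᵀ * Matrix.diagonal ξ * Φ) ≤ colSpan Φ := by
  set A := Φᵀ * Matrix.diagonal ξ * L * Φ with hA
  have hAd : IsUnit A.det := Matrix.isUnit_iff_isUnit_det A |>.mp hinv
  have hLd : IsUnit L.det := Matrix.isUnit_iff_isUnit_det L |>.mp hL
  have hAA : A * A⁻¹ = 1 := Matrix.mul_nonsing_inv A hAd
  have hLinv : L⁻¹ * L = 1 := Matrix.nonsing_inv_mul L hLd
  -- Gᵀ Ξ Φ = Wstarᵀ Aᵀ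
  have hGT : Gᵀ * Matrix.diagonal ξ * Φ = Wstarᵀ * Aᵀ := by
    have h1 : A * Wstar = Φᵀ * Matrix.diagonal ξ * G := by
      rw [hW]
      calc A * ((Φᵀ * Matrix.diagonal ξ * L * Φ)⁻¹ * Φᵀ * Matrix.diagonal ξ * G)
          = (A * A⁻¹) * Φᵀ * Matrix.diagonal ξ * G := by
            simp only [hA, Matrix.mul_assoc]
        _ = Φᵀ * Matrix.diagonal ξ * G := by
            rw [hAA]; simp only [Matrix.one_mul, Matrix.mul_assoc]
    have h2 : (A * Wstar)ᵀ = Gᵀ * Matrix.diagonal ξ * Φ := by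
      rw [h1]
      simp [Matrix.transpose_mul, Matrix.diagonal_transpose, Matrix.mul_assoc]
    rw [← h2, Matrix.transpose_mul]
  have hcrit' : L * Φ * Wstar * Wstarᵀ = G * Wstarᵀ := by
    have h := hcrit
    rw [Matrix.sub_mul, sub_eq_zero] at h
    exact h
  have key : L⁻¹ * G * Gᵀ * Matrix.diagonal ξ * Φ = Φ * (Wstar * (Wstarᵀ * Aᵀ)) := by
    calc L⁻¹ * G * Gᵀ * Matrix.diagonal ξ * Φ
        = L⁻¹ * (G * (Gᵀ * Matrix.diagonal ξ * Φ)) := by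
          simp only [Matrix.mul_assoc]
      _ = L⁻¹ * (G * Wstarᵀ * Aᵀ) := by rw [hGT, Matrix.mul_assoc]
      _ = L⁻¹ * (L * Φ * Wstar * Wstarᵀ * Aᵀ) := by rw [hcrit']
      _ = (L⁻¹ * L) * (Φ * (Wstar * (Wstarᵀ * Aᵀ))) := by
          simp only [Matrix.mul_assoc]
      _ = Φ * (Wstar * (Wstarᵀ * Aᵀ)) := by rw [hLinv, Matrix.one_mul]
  rw [key]
  exact colSpan_mul_le _ _
end

section
/- Let P^π be the 3×3 cyclic permutation matrix sending state 1→2→3→1, with L = I − γP^π, γ ∈ (0,1). Let e₁ = (1,1,1)ᵀ/√3 and let (e₂, e₃) be an orthonormal basis of e₁^⊥. For ω ∈ [0,1], let Φ_ω = [e₁, ω e₂ + (1−ω) e₃] ∈ ℝ^{3×2}, and define the TD value operator V_ω = Φ_ω (Φ_ωᵀ L Φ_ω)^{-1} Φ_ωᵀ. Then ‖V_ω − L^{-1}‖²_F is constant in ω. -/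
open Matrix

/-! Write `Φ_ω = [e₁, u]` with `u = ω e₂ + (1 - ω) e₃ ⊥ e₁`. The cycle `P` fixes `e₁` (from both
sides) and acts on `e₁^⊥` as a rotation by `2π/3`, so `uᵀ P u = uᵀ P² u = -‖u‖²/2`. Hence
`Φᵀ L Φ = diag (1 - γ, (1 + γ/2) ‖u‖²)` and `V_ω = e₁e₁ᵀ/(1 - γ) + uuᵀ/((1 + γ/2) ‖u‖²)`.
Expanding `‖V_ω - L⁻¹‖²_F` in the rank-one term `uuᵀ` leaves, besides an `ω`-free part,
only `‖u‖⁴` and `uᵀ L⁻¹ u`; as `L⁻¹ = (1 - γ³)⁻¹ (1 + γP + γ²P²)`, the latter is a multiple of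
`‖u‖²` depending on `γ` alone, and all powers of `‖u‖` cancel. -/

/-- Squared Frobenius norm. -/
def frobSq {m n : ℕ} (M : Matrix (Fin m) (Fin n) ℝ) : ℝ :=
  ∑ i, ∑ j, (M i j) ^ 2

section Columns

variable {R : Type*} [CommRing R] {k n : Type*}

theorem of_mul_mul_transpose_of_apply [Fintype n] (v : k → n → R) (M : Matrix n n R)
    (i j : k) :
    (of v * M * (of v)ᵀ) i j = v i ⬝ᵥ M *ᵥ v j := by
  simp only [mul_apply, dotProduct, mulVec, of_apply, transpose_apply, Finset.sum_mul,
    Finset.mul_sum]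
  rw [Finset.sum_comm]
  exact Finset.sum_congr rfl fun _ _ => Finset.sum_congr rfl fun _ _ => by ring

theorem transpose_of_mul_diagonal_mul_of [Fintype k] [DecidableEq k] (v : k → n → R)
    (d : k → R) : (of v)ᵀ * diagonal d * of v = ∑ i, d i • vecMulVec (v i) (v i) := by
  ext a b
  simp only [mul_apply, transpose_apply, of_apply, diagonal_apply, Matrix.sum_apply,
    Matrix.smul_apply, vecMulVec_apply, smul_eq_mul, mul_ite, mul_zero, Finset.sum_ite_eq',
    Finset.mem_univ, if_true]
  exact Finset.sum_congr rfl fun _ _ => by ring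

end Columns

theorem inv_diagonal_of_ne_zero {K : Type*} [Field K] {n : Type*} [Fintype n] [DecidableEq n]
    {d : n → K} (hd : ∀ i, d i ≠ 0) : (diagonal d)⁻¹ = diagonal d⁻¹ := by
  refine inv_eq_right_inv ?_
  rw [diagonal_mul_diagonal, ← diagonal_one]
  exact congrArg diagonal (funext fun i => mul_inv_cancel₀ (hd i))

theorem inv_one_sub_smul_of_pow_three_eq_one {K : Type*} [Field K] {n : Type*} [Fintype n]
    [DecidableEq n] {P : Matrix n n K} (hP : P ^ 3 = 1) {γ : K} (hγ : γ ^ 3 ≠ 1) :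
    (1 - γ • P)⁻¹ = (1 - γ ^ 3)⁻¹ • (1 + γ • P + γ ^ 2 • P ^ 2) := by
  refine inv_eq_right_inv ?_
  have h : (1 - γ • P) * (1 + γ • P + γ ^ 2 • P ^ 2) = (1 - γ ^ 3) • (1 : Matrix n n K) := by
    have := mul_neg_geom_sum (γ • P) 3
    simp only [Finset.sum_range_succ, Finset.sum_range_zero, smul_pow, hP] at this
    rw [sub_smul, one_smul]
    simpa using this
  rw [mul_smul_comm, h, smul_smul, inv_mul_cancel₀ (sub_ne_zero.mpr (Ne.symm hγ)), one_smul]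

theorem frobSq_add_smul_vecMulVec_self {n : ℕ} (A : Matrix (Fin n) (Fin n) ℝ) (c : ℝ)
    (u : Fin n → ℝ) :
    frobSq (A + c • vecMulVec u u) =
      frobSq A + 2 * c * (u ⬝ᵥ A *ᵥ u) + c ^ 2 * (u ⬝ᵥ u) ^ 2 := by
  simp only [frobSq, dotProduct, mulVec, Finset.mul_sum, sq (∑ i, u i * u i),
    Finset.sum_mul, ← Finset.sum_add_distrib]
  refine Finset.sum_congr rfl fun i _ => Finset.sum_congr rfl fun j _ => ?_
  simp only [Matrix.add_apply, Matrix.smul_apply, vecMulVec_apply, smul_eq_mul]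
  ring

noncomputable def tdValue {n k : Type*} [Fintype n] [Fintype k] [DecidableEq k]
    (Φ : Matrix n k ℝ) (L : Matrix n n ℝ) : Matrix n n ℝ :=
  Φ * (Φᵀ * L * Φ)⁻¹ * Φᵀ

def cycleMatrix : Matrix (Fin 3) (Fin 3) ℝ := !![0, 1, 0; 0, 0, 1; 1, 0, 0]

namespace cycleMatrix

theorem pow_three : cycleMatrix ^ 3 = 1 := by
  ext i j
  fin_cases i <;> fin_cases j <;> simp [cycleMatrix, pow_succ, mul_apply, Fin.sum_univ_three]

theorem mulVec_const (a : ℝ) : cycleMatrix *ᵥ (fun _ => a) = fun _ => a := by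
  ext i; fin_cases i <;> simp [cycleMatrix, mulVec, dotProduct, Fin.sum_univ_three]

theorem const_vecMul (a : ℝ) : (fun _ => a) ᵥ* cycleMatrix = fun _ => a := by
  ext i; fin_cases i <;> simp [cycleMatrix, vecMul, dotProduct, Fin.sum_univ_three]

theorem dotProduct_mulVec_self {u : Fin 3 → ℝ} (hu : ∑ i, u i = 0) :
    u ⬝ᵥ cycleMatrix *ᵥ u = -(u ⬝ᵥ u) / 2 := by
  simp only [Fin.sum_univ_three] at hu
  simp only [dotProduct, mulVec, cycleMatrix, of_apply, cons_val', cons_val_fin_one,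
    Fin.sum_univ_three, cons_val_zero, cons_val_one, cons_val, zero_mul, one_mul, zero_add,
    add_zero]
  linear_combination (u 0 + u 1 + u 2) / 2 * hu

theorem dotProduct_sq_mulVec_self {u : Fin 3 → ℝ} (hu : ∑ i, u i = 0) :
    u ⬝ᵥ (cycleMatrix ^ 2) *ᵥ u = -(u ⬝ᵥ u) / 2 := by
  simp only [Fin.sum_univ_three] at hu
  simp only [dotProduct, mulVec, cycleMatrix, sq, mul_apply, of_apply, cons_val',
    cons_val_fin_one, Fin.sum_univ_three, cons_val_zero, cons_val_one, cons_val, mul_zero,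
    add_zero, mul_one, zero_add, zero_mul, one_mul]
  linear_combination (u 0 + u 1 + u 2) / 2 * hu

theorem dotProduct_inv_one_sub_smul_mulVec_self {γ : ℝ} (hγ : γ ≠ 1) {u : Fin 3 → ℝ}
    (hu : ∑ i, u i = 0) :
    u ⬝ᵥ (1 - γ • cycleMatrix)⁻¹ *ᵥ u = (2 + γ) / (2 * (1 + γ + γ ^ 2)) * (u ⬝ᵥ u) := by
  have hγ3 : γ ^ 3 ≠ 1 := fun h => hγ <|
    ((pow_eq_one_iff_of_ne_zero three_ne_zero).mp h).resolve_right fun h' => absurd h'.2 (by decide)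
  rw [inv_one_sub_smul_of_pow_three_eq_one pow_three hγ3]
  simp only [smul_mulVec, add_mulVec, one_mulVec, dotProduct_smul, dotProduct_add,
    dotProduct_mulVec_self hu, dotProduct_sq_mulVec_self hu, smul_eq_mul]
  have h1 : 1 - γ ≠ 0 := sub_ne_zero.mpr (Ne.symm hγ)
  have h2 : 1 + γ + γ ^ 2 ≠ 0 := by nlinarith [sq_nonneg (γ + 1 / 2)]
  rw [show 1 - γ ^ 3 = (1 - γ) * (1 + γ + γ ^ 2) by ring]
  field_simp
  ring

theorem gram_eq_diagonal {γ a : ℝ} {e u : Fin 3 → ℝ} (he : e = fun _ => a) (hee : e ⬝ᵥ e = 1)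
    (hu : ∑ i, u i = 0) :
    of ![e, u] * (1 - γ • cycleMatrix) * (of ![e, u])ᵀ =
      diagonal ![1 - γ, (1 + γ / 2) * (u ⬝ᵥ u)] := by
  have hPe : cycleMatrix *ᵥ e = e := he ▸ mulVec_const a
  have hePu : e ⬝ᵥ cycleMatrix *ᵥ u = e ⬝ᵥ u := by
    rw [dotProduct_mulVec, he, const_vecMul]
  have heu : e ⬝ᵥ u = 0 := by simp [he, dotProduct, ← Finset.mul_sum, hu]
  ext i j
  rw [of_mul_mul_transpose_of_apply]
  fin_cases i <;> fin_cases j <;>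
    simp [sub_mulVec, smul_mulVec, dotProduct_sub, dotProduct_smul, hPe, hePu, hee, heu,
      dotProduct_comm u e, dotProduct_mulVec_self hu]
  ring

theorem frobSq_tdValue_sub_inv {γ a : ℝ} (hγ1 : γ ≠ 1) (hγ2 : 2 + γ ≠ 0)
    {e u : Fin 3 → ℝ} (he : e = fun _ => a) (hee : e ⬝ᵥ e = 1) (hu : ∑ i, u i = 0)
    (huu : u ⬝ᵥ u ≠ 0) :
    frobSq (tdValue (of ![e, u])ᵀ (1 - γ • cycleMatrix) - (1 - γ • cycleMatrix)⁻¹) =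
      frobSq ((1 - γ)⁻¹ • vecMulVec e e - (1 - γ • cycleMatrix)⁻¹) - 2 / (1 + γ + γ ^ 2) +
        4 / (2 + γ) ^ 2 := by
  have h1 : 1 - γ ≠ 0 := sub_ne_zero.mpr (Ne.symm hγ1)
  have hQ : (1 + γ / 2) * (u ⬝ᵥ u) ≠ 0 := mul_ne_zero (by contrapose! hγ2; linarith) huu
  have h3 : 1 + γ + γ ^ 2 ≠ 0 := by nlinarith [sq_nonneg (γ + 1 / 2)]
  have heu : e ⬝ᵥ u = 0 := by simp [he, dotProduct, ← Finset.mul_sum, hu]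
  rw [tdValue, transpose_transpose, gram_eq_diagonal he hee hu,
    inv_diagonal_of_ne_zero (by simp [Fin.forall_fin_two, h1, hQ]),
    transpose_of_mul_diagonal_mul_of, Fin.sum_univ_two]
  simp only [Pi.inv_apply, cons_val_zero, cons_val_one]
  rw [add_sub_right_comm, frobSq_add_smul_vecMulVec_self]
  simp only [sub_mulVec, smul_mulVec, vecMulVec_mulVec, dotProduct_sub, dotProduct_smul,
    dotProduct_comm u e, heu, smul_zero, smul_eq_mul, mul_zero, zero_sub,
    dotProduct_inv_one_sub_smul_mulVec_self hγ1 hu]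
  field_simp
  ring

end cycleMatrix

theorem stmt16_general (γ : ℝ) (hγ0 : 0 < γ) (hγ1 : γ < 1)
    (Pπ : Matrix (Fin 3) (Fin 3) ℝ)
    (hP : Pπ = !![0, 1, 0; 0, 0, 1; 1, 0, 0])
    (L : Matrix (Fin 3) (Fin 3) ℝ) (hLdef : L = 1 - γ • Pπ)
    (e₁ e₂ e₃ : Fin 3 → ℝ)
    (he₁ : e₁ = fun _ => (Real.sqrt 3)⁻¹)
    (he₂ : e₂ ⬝ᵥ e₂ = 1) (he₃ : e₃ ⬝ᵥ e₃ = 1) (he₂₃ : e₂ ⬝ᵥ e₃ = 0)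
    (he₁₂ : e₁ ⬝ᵥ e₂ = 0) (he₁₃ : e₁ ⬝ᵥ e₃ = 0)
    (Φ : ℝ → Matrix (Fin 3) (Fin 2) ℝ)
    (hΦ : ∀ ω, Φ ω = Matrix.of fun i (j : Fin 2) =>
      if j = 0 then e₁ i else ω * e₂ i + (1 - ω) * e₃ i) :
    ∃ c : ℝ, ∀ ω ∈ Set.Icc (0 : ℝ) 1,
      frobSq (Φ ω * ((Φ ω)ᵀ * L * Φ ω)⁻¹ * (Φ ω)ᵀ - L⁻¹) = c := by
  obtain rfl : Pπ = cycleMatrix := hP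
  subst hLdef
  have he₁₁ : e₁ ⬝ᵥ e₁ = 1 := by simp [he₁, dotProduct, ← sq]
  have hsum : ∀ v, e₁ ⬝ᵥ v = 0 → ∑ i, v i = 0 := fun v hv => by
    simpa [he₁, dotProduct, ← Finset.mul_sum] using hv
  refine ⟨frobSq ((1 - γ)⁻¹ • vecMulVec e₁ e₁ - (1 - γ • cycleMatrix)⁻¹) -
    2 / (1 + γ + γ ^ 2) + 4 / (2 + γ) ^ 2, fun ω _ => ?_⟩
  set u := ω • e₂ + (1 - ω) • e₃
  have hu : ∑ i, u i = 0 := hsum u (by simp [u, dotProduct_add, he₁₂, he₁₃])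
  have huu : u ⬝ᵥ u = ω ^ 2 + (1 - ω) ^ 2 := by
    simp only [u, dotProduct_add, add_dotProduct, dotProduct_smul, smul_dotProduct, he₂, he₃,
      he₂₃, dotProduct_comm e₃ e₂, smul_eq_mul]
    ring
  have hΦω : Φ ω = (of ![e₁, u])ᵀ := by
    rw [hΦ]
    ext i j
    fin_cases j <;> rfl
  rw [hΦω]
  exact cycleMatrix.frobSq_tdValue_sub_inv hγ1.ne (by linarith) he₁ he₁₁ hu
    (by rw [huu]; nlinarith [sq_nonneg (2 * ω - 1)])

/-- For the 3-state cycle `Pπ`, with `e₁ ∝ (1,1,1)` and `(e₂,e₃)` an orthonormal basis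
of `e₁^⊥`, the TD value-approximation error `‖Φ_ω(Φ_ωᵀLΦ_ω)⁻¹Φ_ωᵀ - L⁻¹‖²_F` of the
rotating representations `Φ_ω = [e₁, ω e₂ + (1-ω)e₃]` is constant in `ω ∈ [0,1]`. -/
theorem stmt16 (γ : ℝ) (hγ0 : 0 < γ) (hγ1 : γ < 1)
    (Pπ : Matrix (Fin 3) (Fin 3) ℝ)
    (hP : Pπ = !![0, 1, 0; 0, 0, 1; 1, 0, 0])
    (L : Matrix (Fin 3) (Fin 3) ℝ) (hLdef : L = 1 - γ • Pπ)
    (e₁ e₂ e₃ : Fin 3 → ℝ)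
    (he₁ : e₁ = fun _ => (Real.sqrt 3)⁻¹)
    (he₂ : e₂ ⬝ᵥ e₂ = 1) (he₃ : e₃ ⬝ᵥ e₃ = 1) (he₂₃ : e₂ ⬝ᵥ e₃ = 0)
    (he₁₂ : e₁ ⬝ᵥ e₂ = 0) (he₁₃ : e₁ ⬝ᵥ e₃ = 0)
    (Φ : ℝ → Matrix (Fin 3) (Fin 2) ℝ)
    (hΦ : ∀ ω, Φ ω = Matrix.of fun i (j : Fin 2) =>
      if j = 0 then e₁ i else ω * e₂ i + (1 - ω) * e₃ i)
    (hinv : ∀ ω ∈ Set.Icc (0 : ℝ) 1, IsUnit ((Φ ω)ᵀ * L * Φ ω)) :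
    ∃ c : ℝ, ∀ ω ∈ Set.Icc (0 : ℝ) 1,
      frobSq (Φ ω * ((Φ ω)ᵀ * L * Φ ω)⁻¹ * (Φ ω)ᵀ - L⁻¹) = c :=
  stmt16_general γ hγ0 hγ1 Pπ hP L hLdef e₁ e₂ e₃ he₁ he₂ he₃ he₂₃ he₁₂ he₁₃ Φ hΦ
end
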